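/- For the linearly oriented quiver A_n, if Y is an extension of E^{ij} by E^{kl} and it is not the case that i+1 ≤ k ≤ j+1 ≤ l, then the extension is trivial, i.e., Y ≅ E^{ij} ⊕ E^{kl}. -/

import Mathlib

open Classical

/-- A representation of a quiver (given by vertex type `ι`, arrow type `E`,
and source/target maps `s t : E → ι`) over a field `K`: a finite-dimensional
`K`-vector space at each vertex and a linear map along each arrow. -/
structure QRep (K : Type) [Field K] {ι : Type} {E : Type} (s t : E → ι) : Type 1 where
  V : ι → Type
  [addV : ∀ i, AddCommGroup (V i)]
  [modV : ∀ i, Module K (V i)]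
  [fdV : ∀ i, FiniteDimensional K (V i)]
  f : ∀ e : E, V (s e) →ₗ[K] V (t e)

attribute [instance] QRep.addV QRep.modV QRep.fdV

namespace QRep

variable {K : Type} [Field K] {ι E : Type} {s t : E → ι}

/-- A morphism of representations: linear maps at each vertex commuting with the arrow maps. -/
structure Hom (X Y : QRep K s t) : Type where
  φ : ∀ i, X.V i →ₗ[K] Y.V i
  comm : ∀ e, (Y.f e).comp (φ (s e)) = (φ (t e)).comp (X.f e)

def Hom.Surjective {X Y : QRep K s t} (f : Hom X Y) : Prop := ∀ i, Function.Surjective (f.φ i)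

def Hom.Injective {X Y : QRep K s t} (f : Hom X Y) : Prop := ∀ i, Function.Injective (f.φ i)

/-- Two representations are isomorphic if there is a morphism bijective at every vertex. -/
def Iso (X Y : QRep K s t) : Prop := ∃ f : Hom X Y, ∀ i, Function.Bijective (f.φ i)

/-- Direct sum of two representations, taken vertexwise. -/
def dsum (X Y : QRep K s t) : QRep K s t where
  V i := X.V i × Y.V i
  f e := (X.f e).prodMap (Y.f e)

instance : Module.Finite K PUnit :=
  Module.Finite.of_surjective (0 : K →ₗ[K] PUnit) (fun x => ⟨0, Subsingleton.elim _ _⟩)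

/-- The zero representation. -/
def zero : QRep K s t where
  V _ := PUnit
  f _ := 0

/-- A representation is zero if all its vector spaces are zero. -/
def IsZero (X : QRep K s t) : Prop := ∀ i, ∀ x : X.V i, x = 0

/-- Indecomposable: nonzero, and not isomorphic to a direct sum of two nonzero representations. -/
def Indec (X : QRep K s t) : Prop :=
  ¬ X.IsZero ∧ ∀ A B : QRep K s t, Iso X (A.dsum B) → A.IsZero ∨ B.IsZero

/-- Direct sum of a finite list of representations. -/
noncomputable def dsumList : List (QRep K s t) → QRep K s t
  | [] => zero
  | X :: L => X.dsum (dsumList L)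

/-- An extension `Y` of `Z` by `X`: an injective morphism `X → Y` and a surjective
morphism `Y → Z` whose vertexwise kernel is the image of `X`. -/
structure Extension (X Y Z : QRep K s t) : Type where
  incl : Hom X Y
  proj : Hom Y Z
  inj : ∀ i, Function.Injective (incl.φ i)
  surj : ∀ i, Function.Surjective (proj.φ i)
  exact : ∀ i, LinearMap.ker (proj.φ i) = LinearMap.range (incl.φ i)

/-- An extension is trivial (split) if there is a morphism `Y → X` restricting to the identity on `X`. -/
def Extension.Trivial {X Y Z : QRep K s t} (E : Extension X Y Z) : Prop :=
  ∃ r : Hom Y X, ∀ i x, r.φ i (E.incl.φ i x) = x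

/-- A subrepresentation of `Y`: a subspace at each vertex, stable under the arrow maps. -/
structure Sub (Y : QRep K s t) : Type where
  p : ∀ i, Submodule K (Y.V i)
  stable : ∀ e, ∀ x ∈ p (s e), Y.f e x ∈ p (t e)

def Sub.toRep {Y : QRep K s t} (S : Sub Y) : QRep K s t where
  V i := S.p i
  f e := (Y.f e).restrict (S.stable e)

/-- The quotient representation `Y/X`. -/
def Sub.quot {Y : QRep K s t} (S : Sub Y) : QRep K s t where
  V i := Y.V i ⧸ S.p i
  f e := Submodule.mapQ (S.p (s e)) (S.p (t e)) (Y.f e) (fun x hx => S.stable e x hx)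

/-- The inclusion morphism of a subrepresentation. -/
def Sub.incl {Y : QRep K s t} (S : Sub Y) : Hom S.toRep Y where
  φ i := (S.p i).subtype
  comm e := by ext x; rfl

/-- The quotient morphism onto the quotient representation. -/
def Sub.mkQ {Y : QRep K s t} (S : Sub Y) : Hom Y S.quot where
  φ i := (S.p i).mkQ
  comm e := by ext x; first | rfl | (simp only [LinearMap.comp_apply]; exact Submodule.mapQ_apply _ _ _ x)

/-- The space of morphisms between two representations, as a subspace of the product of Hom spaces. -/
def HomSpace (X Y : QRep K s t) : Submodule K (∀ i, X.V i →ₗ[K] Y.V i) where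
  carrier := {φ | ∀ e, (Y.f e).comp (φ (s e)) = (φ (t e)).comp (X.f e)}
  add_mem' := by
    intro a b ha hb e
    simp only [Set.mem_setOf_eq] at ha hb
    simp [LinearMap.comp_add, LinearMap.add_comp, ha e, hb e]
  zero_mem' := by intro e; simp
  smul_mem' := by
    intro c a ha e
    simp only [Set.mem_setOf_eq] at ha
    simp [LinearMap.comp_smul, LinearMap.smul_comp, ha e]

end QRep
/-- The source of the `e`-th arrow of the linearly oriented quiver `Aₙ`
(vertices `0,…,n-1`, arrows `e → e+1` for `0 ≤ e < n-1`; 0-based indexing). -/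
def ASrc (n : ℕ) (e : Fin (n - 1)) : Fin n := ⟨e.val, by have := e.isLt; omega⟩

/-- The target of the `e`-th arrow of `Aₙ`. -/
def ATgt (n : ℕ) (e : Fin (n - 1)) : Fin n := ⟨e.val + 1, by have := e.isLt; omega⟩

/-- Representations of the linearly oriented quiver `Aₙ`. -/
abbrev ARep (K : Type) [Field K] (n : ℕ) := QRep K (ASrc n) (ATgt n)

/-- The canonical map from `M` to a submodule `T`: the identity if `T = ⊤`, zero otherwise. -/
noncomputable def toSub {K M : Type} [Field K] [AddCommGroup M] [Module K M]
    (T : Submodule K M) : M →ₗ[K] T :=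
  if h : T = ⊤ then LinearMap.codRestrict T LinearMap.id (fun x => by simp [h]) else 0

/-- The vertex spaces of the interval representation `E^{ij}`: `K` for `i ≤ p ≤ j`, zero otherwise. -/
def ESub (K : Type) [Field K] (n i j : ℕ) (p : Fin n) : Submodule K K :=
  if i ≤ p.val ∧ p.val ≤ j then ⊤ else ⊥

/-- The interval representation `E^{ij}` of `Aₙ` (0-based): one-dimensional spaces at
vertices `i,…,j`, identity maps between consecutive ones, zero elsewhere. -/
noncomputable def Eij (K : Type) [Field K] (n i j : ℕ) : ARep K n where
  V p := ESub K n i j p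
  f e := (toSub (ESub K n i j (ATgt n e))).comp (ESub K n i j (ASrc n e)).subtype

/-- Direct sum of interval representations indexed by a list of pairs. -/
noncomputable def intervalSum (K : Type) [Field K] (n : ℕ) (L : List (ℕ × ℕ)) : ARep K n :=
  QRep.dsumList (L.map fun pr => Eij K n pr.1 pr.2)

/-!
A morphism `E^{ij} → Y` amounts to a vector `y ∈ Y_i` whose transport along the path
`i → j + 1` vanishes. Lift `1 ∈ E^{ij}_i` to some `y₀ ∈ Y_i`; its transport to `j + 1` lies in
the subrepresentation `E^{kl}`, so it is zero unless `k ≤ j + 1 ≤ l`. In that case the hypothesis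
forces `k ≤ i`, so that element is itself the transport of an element of `E^{kl}_i`, and
subtracting it from `y₀` gives a vector that vanishes at `j + 1`. The resulting section
`E^{ij} → Y` of the projection splits the extension.
-/

namespace QRep

variable {K : Type} [Field K] {ι E : Type} {s t : E → ι} {X Y Z : QRep K s t}

lemma Hom.comm_apply (f : Hom X Y) (e : E) (x : X.V (s e)) :
    Y.f e (f.φ (s e) x) = f.φ (t e) (X.f e x) :=
  LinearMap.congr_fun (f.comm e) x

namespace Extension

variable (ext : Extension X Y Z)

lemma proj_incl (i : ι) (x : X.V i) : ext.proj.φ i (ext.incl.φ i x) = 0 :=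
  LinearMap.mem_ker.mp ((ext.exact i).ge ⟨x, rfl⟩)

variable {ext} {sec : Hom Z Y}

lemma sub_section_proj_mem_range (hsec : ∀ i z, ext.proj.φ i (sec.φ i z) = z) (i : ι)
    (y : Y.V i) : y - sec.φ i (ext.proj.φ i y) ∈ LinearMap.range (ext.incl.φ i) := by
  rw [← ext.exact i, LinearMap.mem_ker, map_sub, hsec, sub_self]

noncomputable def retractionAt (hsec : ∀ i z, ext.proj.φ i (sec.φ i z) = z) (i : ι) :
    Y.V i →ₗ[K] X.V i :=
  (LinearEquiv.ofInjective _ (ext.inj i)).symm.toLinearMap ∘ₗ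
    (LinearMap.id - sec.φ i ∘ₗ ext.proj.φ i).codRestrict _ (sub_section_proj_mem_range hsec i)

lemma incl_retractionAt (hsec : ∀ i z, ext.proj.φ i (sec.φ i z) = z) (i : ι) (y : Y.V i) :
    ext.incl.φ i (retractionAt hsec i y) = y - sec.φ i (ext.proj.φ i y) :=
  congrArg Subtype.val ((LinearEquiv.ofInjective _ (ext.inj i)).apply_symm_apply _)

lemma retractionAt_incl (hsec : ∀ i z, ext.proj.φ i (sec.φ i z) = z) (i : ι) (x : X.V i) :
    retractionAt hsec i (ext.incl.φ i x) = x :=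
  ext.inj i (by rw [incl_retractionAt, proj_incl, map_zero, sub_zero])

noncomputable def retraction (hsec : ∀ i z, ext.proj.φ i (sec.φ i z) = z) : Hom Y X where
  φ := retractionAt hsec
  comm e := LinearMap.ext fun y => ext.inj (t e) <| by
    simp only [LinearMap.comp_apply]
    rw [← Hom.comm_apply, incl_retractionAt, incl_retractionAt, map_sub, Hom.comm_apply,
      Hom.comm_apply]

theorem trivial_of_section (hsec : ∀ i z, ext.proj.φ i (sec.φ i z) = z) : ext.Trivial :=
  ⟨retraction hsec, retractionAt_incl hsec⟩

theorem iso_dsum_of_section (hsec : ∀ i z, ext.proj.φ i (sec.φ i z) = z) :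
    Iso Y (Z.dsum X) := by
  refine ⟨⟨fun i => (ext.proj.φ i).prod (retractionAt hsec i), fun e => ?_⟩, fun i => ?_⟩
  · exact LinearMap.ext fun y =>
      Prod.ext (Hom.comm_apply ext.proj e y) (Hom.comm_apply (retraction hsec) e y)
  · refine Function.bijective_iff_has_inverse.mpr
      ⟨fun zx => sec.φ i zx.1 + ext.incl.φ i zx.2, fun y => ?_, fun ⟨z, x⟩ => ?_⟩
    · change sec.φ i (ext.proj.φ i y) + ext.incl.φ i (retractionAt hsec i y) = y
      rw [incl_retractionAt, add_sub_cancel]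
    · have hrsec : retractionAt hsec i (sec.φ i z) = 0 :=
        ext.inj i (by rw [incl_retractionAt, hsec, sub_self, map_zero])
      change (ext.proj.φ i (sec.φ i z + ext.incl.φ i x),
        retractionAt hsec i (sec.φ i z + ext.incl.φ i x)) = (z, x)
      rw [map_add, map_add, hsec, proj_incl, add_zero, hrsec, retractionAt_incl, zero_add]

end Extension

end QRep

namespace ARep

variable {K : Type} [Field K] {n : ℕ}

def step (Y : ARep K n) (p : ℕ) (hp : p + 1 < n) : Y.V ⟨p, by omega⟩ →ₗ[K] Y.V ⟨p + 1, hp⟩ :=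
  Y.f ⟨p, by omega⟩

/-- `sweep Y p seed = ∑_{q ≤ p} (path from q to p) (seed q)`; on `Pi.single m y` it transports
`y` along the path from `m`, and is zero before `m`. -/
noncomputable def sweep (Y : ARep K n) : (p : ℕ) → (hp : p < n) → (∀ q, Y.V q) →ₗ[K] Y.V ⟨p, hp⟩
  | 0, hp => LinearMap.proj (φ := Y.V) (⟨0, hp⟩ : Fin n)
  | p + 1, hp =>
    step Y p hp ∘ₗ sweep Y p (by omega) + LinearMap.proj (φ := Y.V) (⟨p + 1, hp⟩ : Fin n)

lemma sweep_succ (Y : ARep K n) (p : ℕ) (hp : p + 1 < n) (seed : ∀ q, Y.V q) :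
    sweep Y (p + 1) hp seed = step Y p hp (sweep Y p (by omega) seed) + seed ⟨p + 1, hp⟩ :=
  rfl

lemma sweep_single_of_lt (Y : ARep K n) (m : Fin n) (y : Y.V m) :
    ∀ (p : ℕ) (hp : p < n), p < m → sweep Y p hp (Pi.single m y) = 0
  | 0, hp, hm => Pi.single_eq_of_ne (Fin.ne_of_val_ne (by dsimp only; omega)) y
  | p + 1, hp, hm => by
    rw [sweep_succ, sweep_single_of_lt Y m y p (by omega) (by omega), map_zero, zero_add,
      Pi.single_eq_of_ne (Fin.ne_of_val_ne (by dsimp only; omega))]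

lemma sweep_single_self (Y : ARep K n) (m : Fin n) (y : Y.V m) :
    sweep Y m m.isLt (Pi.single m y) = y := by
  obtain ⟨_ | m, hm⟩ := m
  · exact Pi.single_eq_same _ y
  · rw [sweep_succ, sweep_single_of_lt Y _ y m (by omega) (by dsimp only; omega), map_zero,
      zero_add, Pi.single_eq_same]

lemma map_sweep_single {Y W : ARep K n} (f : QRep.Hom Y W) (m : Fin n) (y : Y.V m) :
    ∀ (p : ℕ) (hp : p < n),
      f.φ ⟨p, hp⟩ (sweep Y p hp (Pi.single m y)) = sweep W p hp (Pi.single m (f.φ m y))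
  | 0, hp => Pi.apply_single (fun q => f.φ q) (fun q => map_zero _) m y ⟨0, hp⟩
  | p + 1, hp => by
    rw [sweep_succ, sweep_succ, map_add, ← map_sweep_single f m y p (by omega)]
    congr 1
    · exact (QRep.Hom.comm_apply f ⟨p, by omega⟩ _).symm
    · exact Pi.apply_single (fun q => f.φ q) (fun q => map_zero _) m y ⟨p + 1, hp⟩

end ARep

namespace Eij

open ARep

variable {K : Type} [Field K] {n a b : ℕ}

instance {p : Fin n} : CoeOut ((Eij K n a b).V p) K := ⟨Subtype.val⟩

def mk {p : Fin n} (hp : a ≤ p.val ∧ p.val ≤ b) (c : K) : (Eij K n a b).V p :=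
  ⟨c, by rw [ESub, if_pos hp]; trivial⟩

lemma eq_zero_of_notMem {p : Fin n} (hp : ¬(a ≤ p.val ∧ p.val ≤ b)) (x : (Eij K n a b).V p) :
    x = 0 := by
  obtain ⟨c, hc⟩ := x
  rw [ESub, if_neg hp, Submodule.mem_bot] at hc
  exact Subtype.ext hc

lemma val_f (e : Fin (n - 1)) (x : (Eij K n a b).V (ASrc n e)) :
    ((Eij K n a b).f e x : K) = if a ≤ e.val + 1 ∧ e.val + 1 ≤ b then (x : K) else 0 := by
  change (toSub (ESub K n a b (ATgt n e)) x : K) = _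
  by_cases he : a ≤ e.val + 1 ∧ e.val + 1 ≤ b
  · rw [toSub, dif_pos (show ESub K n a b (ATgt n e) = ⊤ from if_pos he), if_pos he]
    rfl
  · rw [if_neg he]
    exact congrArg Subtype.val (eq_zero_of_notMem he _)

lemma val_sweep_single (m : Fin n) (x : (Eij K n a b).V m) (ha : a ≤ m.val) (p : ℕ)
    (hp : p < n) (hmp : m.val ≤ p) (hpb : p ≤ b) :
    (sweep (Eij K n a b) p hp (Pi.single m x) : K) = x := by
  induction p, hmp using Nat.le_induction with
  | base => exact congrArg Subtype.val (sweep_single_self _ m x)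
  | succ p hmp ih =>
    rw [sweep_succ, Pi.single_eq_of_ne (Fin.ne_of_val_ne (by dsimp only; omega)), add_zero]
    refine (val_f ⟨p, by omega⟩ _).trans ?_
    dsimp only
    rw [if_pos ⟨by omega, hpb⟩, ih (by omega) (by omega)]

variable {i j : ℕ} (Y : ARep K n) (hi : i < n)

/-- `E^{ij}` is generated at vertex `i`, subject only to the path from `i` to `j + 1` vanishing. -/
noncomputable def lift (y : Y.V ⟨i, hi⟩)
    (hy : ∀ h : j + 1 < n, sweep Y (j + 1) h (Pi.single ⟨i, hi⟩ y) = 0) :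
    QRep.Hom (Eij K n i j) Y where
  φ p := LinearMap.toSpanSingleton K (Y.V p) (sweep Y p p.isLt (Pi.single ⟨i, hi⟩ y)) ∘ₗ
    (ESub K n i j p).subtype
  comm := by
    rintro ⟨p, hpn⟩
    refine LinearMap.ext fun z => ?_
    change step Y p (by omega) ((z : K) • sweep Y p _ _) = ((Eij K n i j).f _ z : K) • _
    rw [map_smul, val_f]
    dsimp only
    by_cases hz : i ≤ p ∧ p ≤ j
    · rw [← add_zero (step Y p _ _),
        ← Pi.single_eq_of_ne (Fin.ne_of_val_ne (by dsimp only; omega)) y, ← sweep_succ]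
      split_ifs with hp
      · rfl
      · obtain rfl : p = j := by omega
        rw [hy, smul_zero]
        exact (zero_smul K _).symm
    · rw [show (z : K) = 0 from congrArg Subtype.val (eq_zero_of_notMem hz z), zero_smul,
        ite_self]
      exact (zero_smul K _).symm

lemma lift_apply (y : Y.V ⟨i, hi⟩)
    (hy : ∀ h : j + 1 < n, sweep Y (j + 1) h (Pi.single ⟨i, hi⟩ y) = 0) (p : Fin n)
    (z : (Eij K n i j).V p) :
    (lift Y hi y hy).φ p z = (z : K) • sweep Y p p.isLt (Pi.single ⟨i, hi⟩ y) :=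
  rfl

lemma map_lift {y : Y.V ⟨i, hi⟩}
    {hy : ∀ h : j + 1 < n, sweep Y (j + 1) h (Pi.single ⟨i, hi⟩ y) = 0}
    (f : QRep.Hom Y (Eij K n i j)) (hf : (f.φ ⟨i, hi⟩ y : K) = 1) (p : Fin n)
    (z : (Eij K n i j).V p) : f.φ p ((lift Y hi y hy).φ p z) = z := by
  obtain ⟨p, hp⟩ := p
  by_cases hz : i ≤ p ∧ p ≤ j
  · refine Subtype.ext ?_
    rw [lift_apply, map_smul, map_sweep_single]
    have hone : (sweep (Eij K n i j) p hp (Pi.single ⟨i, hi⟩ (f.φ _ y)) : K) = 1 :=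
      (val_sweep_single (a := i) ⟨i, hi⟩ _ le_rfl p hp hz.1 hz.2).trans hf
    exact (congrArg ((z : K) * ·) hone).trans (mul_one _)
  · rw [eq_zero_of_notMem hz z, map_zero, map_zero]

end Eij

open ARep

lemma QRep.Extension.exists_preimage_one_sweep_eq_zero {K : Type} [Field K] {n i j k l : ℕ}
    {Y : ARep K n} (ext : QRep.Extension (Eij K n k l) Y (Eij K n i j)) (hi : i < n)
    (hij : i ≤ j) (hcond : ¬ (i + 1 ≤ k ∧ k ≤ j + 1 ∧ j + 1 ≤ l)) :
    ∃ y : Y.V ⟨i, hi⟩, (ext.proj.φ _ y : K) = 1 ∧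
      ∀ h : j + 1 < n, sweep Y (j + 1) h (Pi.single ⟨i, hi⟩ y) = 0 := by
  obtain ⟨y₀, hy₀⟩ := ext.surj ⟨i, hi⟩ (Eij.mk ⟨le_rfl, hij⟩ 1)
  by_cases hend : j + 1 < n
  swap
  · exact ⟨y₀, congrArg Subtype.val hy₀, fun h => absurd h hend⟩
  have hw : ext.proj.φ _ (sweep Y (j + 1) hend (Pi.single ⟨i, hi⟩ y₀)) = 0 := by
    rw [map_sweep_single]
    exact Eij.eq_zero_of_notMem (by dsimp only; omega) _
  obtain ⟨c, hc⟩ := (ext.exact _).le hw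
  by_cases hsupp : k ≤ j + 1 ∧ j + 1 ≤ l
  · have hki : k ≤ i := by omega
    let c' : (Eij K n k l).V ⟨i, hi⟩ := Eij.mk ⟨hki, show i ≤ l by omega⟩ (c : K)
    have hc' : sweep (Eij K n k l) (j + 1) hend (Pi.single ⟨i, hi⟩ c') = c :=
      Subtype.ext (Eij.val_sweep_single _ c' hki _ hend (by dsimp only; omega) hsupp.2)
    refine ⟨y₀ - ext.incl.φ _ c', ?_, fun _ => ?_⟩
    · rw [map_sub, proj_incl, sub_zero, hy₀]
      rfl
    · rw [Pi.single_sub, map_sub, ← map_sweep_single, hc', hc, sub_self]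
  · refine ⟨y₀, congrArg Subtype.val hy₀, fun _ => ?_⟩
    rw [← hc, Eij.eq_zero_of_notMem hsupp c, map_zero]

theorem stmt6_general (K : Type) [Field K] (n i j k l : ℕ)
    (hij : i ≤ j) (hj : j < n)
    (Y : ARep K n) (ext : QRep.Extension (Eij K n k l) Y (Eij K n i j))
    (hcond : ¬ (i + 1 ≤ k ∧ k ≤ j + 1 ∧ j + 1 ≤ l)) :
    ext.Trivial ∧ QRep.Iso Y (QRep.dsum (Eij K n i j) (Eij K n k l)) := by
  have hi : i < n := hij.trans_lt hj
  obtain ⟨y, hy_one, hy⟩ := ext.exists_preimage_one_sweep_eq_zero hi hij hcond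
  have hsec := Eij.map_lift Y hi (hy := hy) ext.proj hy_one
  exact ⟨QRep.Extension.trivial_of_section hsec, QRep.Extension.iso_dsum_of_section hsec⟩

/-- if `Y` is an extension of `E^{ij}` by `E^{kl}` and it is not the case that
`i+1 ≤ k ≤ j+1 ≤ l`, then the extension is trivial, i.e. `Y ≅ E^{ij} ⊕ E^{kl}`. -/
theorem stmt6 (K : Type) [Field K] (n i j k l : ℕ)
    (hij : i ≤ j) (hj : j < n) (hkl : k ≤ l) (hl : l < n)
    (Y : ARep K n) (ext : QRep.Extension (Eij K n k l) Y (Eij K n i j))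
    (hcond : ¬ (i + 1 ≤ k ∧ k ≤ j + 1 ∧ j + 1 ≤ l)) :
    ext.Trivial ∧ QRep.Iso Y (QRep.dsum (Eij K n i j) (Eij K n k l)) :=
  stmt6_general K n i j k l hij hj Y ext hcond
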